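/- arXiv:1908.05888 — 2 statements merged into one kernel-verified Lean document; each statement's English description precedes it below -/
import Mathlib

section
/- Let (T, τ) be a Λ-linear (Q,I)-contraction datum. Then for every representation M of Q over Λ and all elements q₁, q₂ of Q, the Λ-linear endomorphisms of T(M|_I) satisfy (τ(q₁)_{M|_I} ∘ T(λ_{q₁,M})) ∘ (τ(q₂)_{M|_I} ∘ T(λ_{q₂,M})) = τ(q₁q₂)_{M|_I} ∘ T(λ_{q₁q₂,M}). -/
open CategoryTheory

noncomputable section ContractionSetup

variable (Λ : Type) [CommRing Λ] {Q : Type} [Group Q]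

/-- Conjugation by `q : Q` as a monoid homomorphism `I →* I`, for `I` a normal subgroup of `Q`. -/
def conjSubgroupHom (I : Subgroup Q) [I.Normal] (q : Q) : ↥I →* ↥I where
  toFun t := ⟨q * ↑t * q⁻¹, Subgroup.Normal.conj_mem ‹I.Normal› ↑t t.2 q⟩
  map_one' := by ext; simp
  map_mul' t₁ t₂ := by ext; push_cast; group

variable (I : Subgroup Q) [I.Normal]

/-- The representation `q*M`: same underlying `Λ`-module as `M`, with `t : I` acting as
`q * t * q⁻¹` acts on `M`. -/
def conjRep (q : Q) (M : Rep.{0} Λ ↥I) : Rep.{0} Λ ↥I :=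
  Rep.of (M.ρ.comp (conjSubgroupHom I q))

/-- The `Λ`-linear functor `q* : Rep Λ I ⥤ Rep Λ I`. -/
def conjFunctor (q : Q) : Rep.{0} Λ ↥I ⥤ Rep.{0} Λ ↥I where
  obj M := conjRep Λ I q M
  map f := Rep.ofHom
    { toLinearMap := f.hom.toLinearMap
      isIntertwining' := fun t => f.hom.isIntertwining' (conjSubgroupHom I q t) }

/-- The canonical identification `q₂*(q₁*M) ⟶ (q₁q₂)*M` (the identity map on underlying
modules), realizing the equality of functors `(q₁q₂)* = q₂* ∘ q₁*`. -/
def conjRepMulHom (q₁ q₂ : Q) (M : Rep.{0} Λ ↥I) :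
    conjRep Λ I q₂ (conjRep Λ I q₁ M) ⟶ conjRep Λ I (q₁ * q₂) M := Rep.ofHom {
  toLinearMap := LinearMap.id
  isIntertwining' t := by
    have h : conjSubgroupHom I q₁ (conjSubgroupHom I q₂ t) = conjSubgroupHom I (q₁ * q₂) t := by
      ext
      simp only [conjSubgroupHom, MonoidHom.coe_mk, OneHom.coe_mk]
      group
    ext x
    show M.ρ (conjSubgroupHom I q₁ (conjSubgroupHom I q₂ t)) x =
      M.ρ (conjSubgroupHom I (q₁ * q₂) t) x
    rw [h] }

/-- The restriction `M|_I` to `I` of a representation `M` of `Q`. -/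
def resRep (M : Rep.{0} Λ Q) : Rep.{0} Λ ↥I :=
  Rep.of (M.ρ.comp I.subtype)

/-- For `M` a representation of `Q` and `q : Q`, the `I`-equivariant `Λ`-linear map
`λ_{q,M} : M|_I ⟶ q*(M|_I)` given by `m ↦ q • m`. -/
def lambdaRes (M : Rep.{0} Λ Q) (q : Q) :
    resRep Λ I M ⟶ conjRep Λ I q (resRep Λ I M) := Rep.ofHom {
  toLinearMap := M.ρ q
  isIntertwining' t := by
    ext x
    show M.ρ q (M.ρ (I.subtype t) x) = M.ρ (I.subtype (conjSubgroupHom I q t)) (M.ρ q x)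
    have h : I.subtype (conjSubgroupHom I q t) * q = q * I.subtype t := by
      simp [conjSubgroupHom]
    rw [← Module.End.mul_apply, ← Module.End.mul_apply, ← map_mul, ← map_mul, h] }

/-- For `t ∈ I` and `M : Rep Λ I`, the component at `M` of the natural transformation
`λ_t : id ⟶ t*`, given by the action of `t` on `M`. -/
def lambdaI (t : ↥I) (M : Rep.{0} Λ ↥I) : M ⟶ conjRep Λ I (↑t : Q) M := Rep.ofHom {
  toLinearMap := M.ρ t
  isIntertwining' u := by
    ext x
    show M.ρ t (M.ρ u x) = M.ρ (conjSubgroupHom I (↑t : Q) u) (M.ρ t x)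
    have h : conjSubgroupHom I (↑t : Q) u * t = t * (show ↥I from u) := by
      ext
      simp only [conjSubgroupHom, MonoidHom.coe_mk, OneHom.coe_mk, Subgroup.coe_mul]
      group
    rw [← Module.End.mul_apply, ← Module.End.mul_apply, ← map_mul, ← map_mul, h] }

end ContractionSetup

section Contraction

variable {Λ : Type} [CommRing Λ] {Q : Type} [Group Q] {I : Subgroup Q} [I.Normal]

theorem lambdaRes_mul (M : Rep.{0} Λ Q) (q₁ q₂ : Q) :
    lambdaRes Λ I M (q₁ * q₂) = lambdaRes Λ I M q₂ ≫
      (conjFunctor Λ I q₂).map (lambdaRes Λ I M q₁) ≫ conjRepMulHom Λ I q₁ q₂ (resRep Λ I M) := by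
  apply Rep.hom_ext
  ext x
  exact congrArg (· x) (map_mul M.ρ q₁ q₂)

/-- Naturality of `τ(q₂)` moves `T f₁` to the left of it; condition (a) at `C` then merges
`τ(q₂)` and `τ(q₁)` into `τ(q₁q₂)`. -/
theorem map_comp_app_comp_map_comp_app {T : Rep.{0} Λ ↥I ⥤ ModuleCat Λ}
    (τ : ∀ q : Q, conjFunctor Λ I q ⋙ T ⟶ T) {q₁ q₂ : Q} {A B C : Rep.{0} Λ ↥I}
    (tau_mul : T.map (conjRepMulHom Λ I q₁ q₂ C) ≫ (τ (q₁ * q₂)).app C =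
      (τ q₂).app (conjRep Λ I q₁ C) ≫ (τ q₁).app C)
    (f₂ : A ⟶ (conjFunctor Λ I q₂).obj B) (f₁ : B ⟶ (conjFunctor Λ I q₁).obj C) :
    (T.map f₂ ≫ (τ q₂).app B) ≫ (T.map f₁ ≫ (τ q₁).app C) =
      T.map (f₂ ≫ (conjFunctor Λ I q₂).map f₁ ≫ conjRepMulHom Λ I q₁ q₂ C) ≫
        (τ (q₁ * q₂)).app C := by
  calc (T.map f₂ ≫ (τ q₂).app B) ≫ (T.map f₁ ≫ (τ q₁).app C)
      = T.map f₂ ≫ ((τ q₂).app B ≫ T.map f₁) ≫ (τ q₁).app C := by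
        simp only [Category.assoc]
    _ = T.map f₂ ≫ T.map ((conjFunctor Λ I q₂).map f₁) ≫
          (τ q₂).app ((conjFunctor Λ I q₁).obj C) ≫ (τ q₁).app C := by
        rw [← (τ q₂).naturality f₁, Functor.comp_map, Category.assoc]
    _ = T.map f₂ ≫ T.map ((conjFunctor Λ I q₂).map f₁) ≫
          T.map (conjRepMulHom Λ I q₁ q₂ C) ≫ (τ (q₁ * q₂)).app C :=
        -- `rw` fails from here on: the type of `conjRepMulHom` matches the goal only up to
        -- unfolding `conjFunctor`, so the remaining steps are closed by terms checked up to defeq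
        congrArg (T.map f₂ ≫ T.map _ ≫ ·) tau_mul.symm
    _ = (T.map f₂ ≫ T.map ((conjFunctor Λ I q₂).map f₁) ≫
          T.map (conjRepMulHom Λ I q₁ q₂ C)) ≫ (τ (q₁ * q₂)).app C :=
        (Category.assoc _ _ _).symm
    _ = T.map (f₂ ≫ (conjFunctor Λ I q₂).map f₁ ≫ conjRepMulHom Λ I q₁ q₂ C) ≫
          (τ (q₁ * q₂)).app C :=
        congrArg (· ≫ _) ((T.map_comp _ _).trans (congrArg (T.map f₂ ≫ ·) (T.map_comp _ _))).symm

end Contraction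

theorem contraction_endo_mul_general (Λ : Type) [CommRing Λ] {Q : Type} [Group Q]
    (I : Subgroup Q) [I.Normal]
    (T : Rep.{0} Λ ↥I ⥤ ModuleCat Λ)
    (τ : ∀ q : Q, conjFunctor Λ I q ⋙ T ⟶ T)
    -- condition (a): `τ(q₁q₂)_M = τ(q₁)_M ∘ τ(q₂)_{q₁*M}` under the canonical identification
    -- `(q₁q₂)*M = q₂*(q₁*M)`
    (tau_mul : ∀ (q₁ q₂ : Q) (M : Rep.{0} Λ ↥I),
      T.map (conjRepMulHom Λ I q₁ q₂ M) ≫ (τ (q₁ * q₂)).app M =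
        (τ q₂).app (conjRep Λ I q₁ M) ≫ (τ q₁).app M)
    (M : Rep.{0} Λ Q) (q₁ q₂ : Q) :
    (T.map (lambdaRes Λ I M q₂) ≫ (τ q₂).app (resRep Λ I M)) ≫
      (T.map (lambdaRes Λ I M q₁) ≫ (τ q₁).app (resRep Λ I M)) =
      T.map (lambdaRes Λ I M (q₁ * q₂)) ≫ (τ (q₁ * q₂)).app (resRep Λ I M) := by
  exact (map_comp_app_comp_map_comp_app τ (tau_mul q₁ q₂ _) _ _).trans
    (congrArg (fun f => T.map f ≫ (τ (q₁ * q₂)).app (resRep Λ I M)) (lambdaRes_mul M q₁ q₂).symm)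

/-- Let `(T, τ)` be a `Λ`-linear `(Q,I)`-contraction datum. Then for every
representation `M` of `Q` over `Λ` and all `q₁ q₂ : Q`, the `Λ`-linear endomorphisms of
`T(M|_I)` satisfy
`(τ(q₁)_{M|_I} ∘ T(λ_{q₁,M})) ∘ (τ(q₂)_{M|_I} ∘ T(λ_{q₂,M})) = τ(q₁q₂)_{M|_I} ∘ T(λ_{q₁q₂,M})`. -/
theorem contraction_endo_mul (Λ : Type) [CommRing Λ] {Q : Type} [Group Q]
    (I : Subgroup Q) [I.Normal]
    (T : Rep.{0} Λ ↥I ⥤ ModuleCat Λ) [T.Additive] [T.Linear Λ]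
    (τ : ∀ q : Q, conjFunctor Λ I q ⋙ T ⟶ T)
    -- condition (a): `τ(q₁q₂)_M = τ(q₁)_M ∘ τ(q₂)_{q₁*M}` under the canonical identification
    -- `(q₁q₂)*M = q₂*(q₁*M)`
    (tau_mul : ∀ (q₁ q₂ : Q) (M : Rep.{0} Λ ↥I),
      T.map (conjRepMulHom Λ I q₁ q₂ M) ≫ (τ (q₁ * q₂)).app M =
        (τ q₂).app (conjRep Λ I q₁ M) ≫ (τ q₁).app M)
    -- condition (b): `τ(t) ∘ T(λ_t) = id` for every `t ∈ I`
    (tau_lambda : ∀ (t : ↥I) (M : Rep.{0} Λ ↥I),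
      T.map (lambdaI Λ I t M) ≫ (τ (↑t : Q)).app M = 𝟙 (T.obj M))
    (M : Rep.{0} Λ Q) (q₁ q₂ : Q) :
    (T.map (lambdaRes Λ I M q₂) ≫ (τ q₂).app (resRep Λ I M)) ≫
      (T.map (lambdaRes Λ I M q₁) ≫ (τ q₁).app (resRep Λ I M)) =
      T.map (lambdaRes Λ I M (q₁ * q₂)) ≫ (τ (q₁ * q₂)).app (resRep Λ I M) :=
  contraction_endo_mul_general Λ I T τ tau_mul M q₁ q₂
end

section
/- Let T : Rep Λ I ⥤ Mod Λ be a Λ-linear exact functor that preserves small filtered colimits. If M is an object of Rep Λ I whose underlying Λ-module is flat, then T(M) is a flat Λ-module. -/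
/-!
Put `Φ N := T (M ⊗ N)` for `Λ`-modules `N` (with `I` acting on `M` only). As `M` is flat and `T`
is exact, `Φ : Mod Λ ⥤ Mod Λ` is an exact `Λ`-linear functor commuting with filtered colimits, and
`Φ Λ = T M`. For such a functor every relation `∑ fᵢ xᵢ = 0` in `Φ Λ` is trivial: the `xᵢ` glue to
an element of `Φ Λˡ` killed by `Φ f`, so it comes from `Φ (ker f)`, hence from `Φ P` for a finitely
generated `P ⊆ ker f`, hence from `Φ Λⁿ` along a surjection `Λⁿ → P`. The matrix of the composite
`Λⁿ → Λˡ` exhibits the relation as trivial.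
-/

open CategoryTheory Limits MonoidalCategory

universe u v w

namespace Rep

section

variable {k : Type u} [CommRing k] {G : Type v} [Monoid G]

instance : (trivialFunctor.{w} k G).Additive where

instance : (trivialFunctor.{w} k G).Linear k where

instance : PreservesLimits (trivialFunctor.{w} k G) :=
  (coinvariantsAdjunction k G).rightAdjoint_preservesLimits

instance preservesFiniteLimits_tensorLeft (A : Rep.{u} k G) [Module.Flat k A.V] :
    PreservesFiniteLimits (tensorLeft A) := by
  have : PreservesFiniteLimits (tensorLeft A ⋙ forget₂ (Rep k G) (ModuleCat k)) :=
    inferInstanceAs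
      (PreservesFiniteLimits (forget₂ (Rep k G) (ModuleCat k) ⋙ tensorLeft (ModuleCat.of k A.V)))
  exact preservesFiniteLimits_of_reflects_of_preserves _ (forget₂ (Rep k G) (ModuleCat k))

end

instance {k : Type u} [CommRing k] {G : Type v} [Group G] :
    PreservesColimits (trivialFunctor.{w} k G) :=
  (invariantsAdjunction k G).leftAdjoint_preservesColimits

end Rep

instance ModuleCat.forget_preservesFilteredColimitsOfSize_zero {R : Type} [Ring R] :
    PreservesFilteredColimitsOfSize.{0, 0} (forget (ModuleCat.{v} R)) := by
  have : PreservesFilteredColimitsOfSize.{0, 0} (forget AddCommGrpCat.{v}) :=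
    preservesFilteredColimitsOfSize_shrink _
  exact comp_preservesFilteredColimits (forget₂ _ AddCommGrpCat) (forget AddCommGrpCat)

namespace CategoryTheory.Functor

variable {R : Type} [CommRing R] (Φ : ModuleCat.{0} R ⥤ ModuleCat.{v} R)

noncomputable def freeComparison {ι : Type} [Fintype ι] [DecidableEq ι]
    (y : ι → Φ.obj (ModuleCat.of R R)) : Φ.obj (ModuleCat.of R (ι → R)) :=
  ∑ i, Φ.map (ModuleCat.ofHom (LinearMap.single R (fun _ ↦ R) i)) (y i)

section FreeComparison

variable {ι : Type} [Fintype ι] [DecidableEq ι]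

lemma map_freeComparison [Φ.Additive] [Φ.Linear R] (φ : (ι → R) →ₗ[R] R)
    (y : ι → Φ.obj (ModuleCat.of R R)) :
    Φ.map (ModuleCat.ofHom φ) (Φ.freeComparison y) = ∑ i, φ (Pi.single i 1) • y i := by
  have hsingle (i : ι) : ModuleCat.ofHom (LinearMap.single R (fun _ ↦ R) i) ≫ ModuleCat.ofHom φ
      = φ (Pi.single i 1) • 𝟙 (ModuleCat.of R R) := by
    ext; simp [mul_comm]
  rw [freeComparison, _root_.map_sum]
  refine Finset.sum_congr rfl fun i _ ↦ ?_
  rw [← ModuleCat.comp_apply, ← Φ.map_comp, hsingle, Φ.map_smul, Φ.map_id]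
  rfl

lemma freeComparison_map_proj [Φ.Additive] (z : Φ.obj (ModuleCat.of R (ι → R))) :
    Φ.freeComparison (fun i ↦ Φ.map (ModuleCat.ofHom (LinearMap.proj i)) z) = z := by
  have hsum : ∑ i, ModuleCat.ofHom (LinearMap.proj (φ := fun _ : ι ↦ R) i) ≫
      ModuleCat.ofHom (LinearMap.single R (fun _ ↦ R) i) = 𝟙 (ModuleCat.of R (ι → R)) := by
    ext; simp
  calc Φ.freeComparison _
      = Φ.map (∑ i, ModuleCat.ofHom (LinearMap.proj (φ := fun _ : ι ↦ R) i) ≫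
          ModuleCat.ofHom (LinearMap.single R (fun _ ↦ R) i)) z := by
        simp only [freeComparison, Φ.map_sum, Φ.map_comp, ModuleCat.hom_sum,
          LinearMap.sum_apply, ModuleCat.comp_apply]
    _ = z := by rw [hsum, Φ.map_id]; rfl

end FreeComparison

variable {M N : Type} [AddCommGroup M] [Module R M] [AddCommGroup N] [Module R N]

lemma exists_map_ker_subtype_eq_of_map_eq_zero [Φ.Additive] [PreservesFiniteLimits Φ]
    (g : M →ₗ[R] N) (z : Φ.obj (ModuleCat.of R M)) (hz : Φ.map (ModuleCat.ofHom g) z = 0) :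
    ∃ s, Φ.map (ModuleCat.ofHom (LinearMap.ker g).subtype) s = z := by
  let S := ShortComplex.mk (ModuleCat.ofHom (LinearMap.ker g).subtype) (ModuleCat.ofHom g)
    (by ext x; exact x.2)
  have hS : S.Exact := S.moduleCat_exact_iff.mpr fun x hx ↦ ⟨⟨x, hx⟩, rfl⟩
  have hmono : Mono S.f := (ModuleCat.mono_iff_injective _).mpr (LinearMap.ker g).injective_subtype
  have hΦ : ∀ S : ShortComplex (ModuleCat R), S.Exact ∧ Mono S.f →
      (S.map Φ).Exact ∧ Mono (Φ.map S.f) :=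
    (Φ.preservesFiniteLimits_tfae.out 3 1).mp ‹_›
  have hΦS := (hΦ S ⟨hS, hmono⟩).1
  exact (ShortComplex.moduleCat_exact_iff _).mp hΦS z hz

lemma surjective_map_ofHom [PreservesFiniteColimits Φ] {π : M →ₗ[R] N}
    (hπ : Function.Surjective π) : Function.Surjective (Φ.map (ModuleCat.ofHom π)) := by
  have : Epi (ModuleCat.ofHom π) := (ModuleCat.epi_iff_surjective _).mpr hπ
  exact (ModuleCat.epi_iff_surjective _).mp inferInstance

lemma exists_fg_map_subtype_eq [PreservesFilteredColimitsOfSize.{0, 0} Φ] (z : Φ.obj (.of R M)) :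
    ∃ P : Submodule R M, P.FG ∧
      ∃ z₀ : Φ.obj (ModuleCat.of R P), Φ.map (ModuleCat.ofHom P.subtype) z₀ = z := by
  classical
  let e := Φ.mapIso (Module.fgSystem.equiv R M).toModuleIso
  obtain ⟨P, z₀, hz₀⟩ := Concrete.isColimit_exists_rep _
    (isColimitOfPreserves Φ (ModuleCat.directLimitIsColimit _ (Module.fgSystem R M))) (e.inv z)
  refine ⟨P.1, P.2, z₀, ?_⟩
  have hP : ModuleCat.ofHom (Module.DirectLimit.of R _ _ (Module.fgSystem R M) P) ≫
      (Module.fgSystem.equiv R M).toModuleIso.hom = ModuleCat.ofHom P.1.subtype :=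
    ModuleCat.hom_ext (Module.fgSystem.equiv_comp_of P)
  calc Φ.map (ModuleCat.ofHom P.1.subtype) z₀
      = e.hom (Φ.map (ModuleCat.ofHom (Module.DirectLimit.of R _ _ (Module.fgSystem R M) P))
          z₀) := by
        rw [← hP, Φ.map_comp]; rfl
    _ = e.hom (e.inv z) := congrArg _ hz₀
    _ = z := e.inv_hom_id_apply z

theorem flat_obj_self [Φ.Additive] [Φ.Linear R] [PreservesFiniteLimits Φ]
    [PreservesFiniteColimits Φ] [PreservesFilteredColimitsOfSize.{0, 0} Φ] :
    Module.Flat R (Φ.obj (ModuleCat.of R R)) := by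
  refine Module.Flat.of_forall_isTrivialRelation fun {l f x} hfx ↦ ?_
  let g : (Fin l → R) →ₗ[R] R := Fintype.linearCombination R f
  obtain ⟨s, hs⟩ := Φ.exists_map_ker_subtype_eq_of_map_eq_zero g (Φ.freeComparison x) (by
    simpa [map_freeComparison, g, Fintype.linearCombination_apply_single] using hfx)
  obtain ⟨P, hP, s₀, rfl⟩ := Φ.exists_fg_map_subtype_eq s
  have : Module.Finite R P := Module.Finite.iff_fg.mpr hP
  obtain ⟨n, π, hπ⟩ := Module.Finite.exists_fin' R P
  obtain ⟨y, rfl⟩ := Φ.surjective_map_ofHom hπ s₀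
  let a : (Fin n → R) →ₗ[R] (Fin l → R) := (LinearMap.ker g).subtype ∘ₗ P.subtype ∘ₗ π
  have hxa : Φ.freeComparison x = Φ.map (ModuleCat.ofHom a) y := by
    rw [← hs, ← ModuleCat.comp_apply, ← ModuleCat.comp_apply, ← Φ.map_comp, ← Φ.map_comp]
    rfl
  refine ⟨n, fun i j ↦ a (Pi.single j 1) i, fun j ↦ Φ.map (ModuleCat.ofHom (LinearMap.proj j)) y,
    fun i ↦ ?_, fun j ↦ ?_⟩
  · calc x i = Φ.map (ModuleCat.ofHom (LinearMap.proj i)) (Φ.freeComparison x) := by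
          simp [map_freeComparison, Pi.single_apply]
      _ = Φ.map (ModuleCat.ofHom (LinearMap.proj i ∘ₗ a))
            (Φ.freeComparison fun j ↦ Φ.map (ModuleCat.ofHom (LinearMap.proj j)) y) := by
          rw [freeComparison_map_proj, hxa, ← ModuleCat.comp_apply, ← Φ.map_comp]; rfl
      _ = _ := map_freeComparison ..
  · have hker : g (a (Pi.single j 1)) = 0 := (P.subtype (π (Pi.single j 1))).2
    simpa only [g, Fintype.linearCombination_apply, smul_eq_mul, mul_comm] using hker

end CategoryTheory.Functor

/-- Let `T : Rep Λ I ⥤ Mod Λ` be a `Λ`-linear exact functor (additive and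
preserving short exact sequences) that preserves small filtered colimits. If `M : Rep Λ I`
has flat underlying `Λ`-module, then `T(M)` is a flat `Λ`-module. -/
theorem exact_functor_flat (Λ : Type) [CommRing Λ] (I : Type) [Group I]
    (T : Rep.{0} Λ I ⥤ ModuleCat Λ) [T.Additive] [T.Linear Λ]
    (hexact : ∀ S : ShortComplex (Rep Λ I), S.ShortExact → (S.map T).ShortExact)
    [Limits.PreservesFilteredColimits T]
    (M : Rep.{0} Λ I) (hM : Module.Flat Λ M.V) :
    Module.Flat Λ ↥(T.obj M) := by
  obtain ⟨_, _⟩ := (T.exact_tfae.out 0 3).mp hexact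
  have : PreservesFilteredColimitsOfSize.{0, 0} T := preservesFilteredColimitsOfSize_shrink T
  -- `Rep.trivialFunctor` sends `Λ` to the tensor unit on the nose.
  have : Module.Flat Λ (T.obj (M ⊗ 𝟙_ (Rep Λ I))) :=
    (Rep.trivialFunctor.{0} Λ I ⋙ tensorLeft M ⋙ T).flat_obj_self
  exact Module.Flat.of_linearEquiv (T.mapIso (ρ_ M)).toLinearEquiv.symm
end
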